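/- Let G=(V,E) be a finite simple graph on n vertices with E nonempty, and define f(x) = -∑_v x_v + (γ/2) xᵀ A_G x - (1/2) xᵀ A_{G'} x on [0,1]^n where γ ≥ n. Then every local minimizer of f over [0,1]^n is a binary vector, i.e., lies in {0,1}^n. -/

import Mathlib

open scoped Classical
open Finset Matrix

/-- The dataless quadratic network objective
`f(x) = -∑_v x_v + (γ/2) xᵀ A_G x - (1/2) xᵀ A_{Gᶜ} x`. -/
noncomputable def quantNetObj {n : ℕ} (G : SimpleGraph (Fin n)) (γ : ℝ) (x : Fin n → ℝ) : ℝ :=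
  -(∑ v, x v) + γ / 2 * (x ⬝ᵥ ((G.adjMatrix ℝ) *ᵥ x)) - 1 / 2 * (x ⬝ᵥ ((Gᶜ.adjMatrix ℝ) *ᵥ x))

/-!
At a local minimizer `x`, a fractional coordinate `x v ∈ (0,1)` can be moved in both directions,
so the partial derivative `γ (A_G x)_v - (A_{Gᶜ} x)_v - 1` vanishes there. This forces a neighbour
`u` of `v` with `x u > 0`, and `x u = 1` is impossible: it would give `γ (A_G x)_v ≥ γ ≥ n`, while
`1 + (A_{Gᶜ} x)_v < n`. So `x u` is fractional as well, and along `e_v - e_u` the objective is a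
quadratic with leading coefficient `-γ < 0`, which has no local minimum.
-/

open Filter Topology

theorem Matrix.IsSymm.dotProduct_mulVec_add_smul {ι R : Type*} [Fintype ι] [CommRing R]
    {A : Matrix ι ι R} (hA : A.IsSymm) (x d : ι → R) (t : R) :
    (x + t • d) ⬝ᵥ A *ᵥ (x + t • d) =
      x ⬝ᵥ A *ᵥ x + 2 * (d ⬝ᵥ A *ᵥ x) * t + (d ⬝ᵥ A *ᵥ d) * t ^ 2 := by
  have hswap : x ⬝ᵥ A *ᵥ d = d ⬝ᵥ A *ᵥ x := by
    rw [dotProduct_mulVec, ← mulVec_transpose, hA.eq, dotProduct_comm]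
  simp only [mulVec_add, mulVec_smul, dotProduct_add, add_dotProduct, dotProduct_smul,
    smul_dotProduct, smul_eq_mul, hswap]
  ring

theorem single_sub_single_dotProduct_mulVec {ι R : Type*} [Fintype ι] [DecidableEq ι]
    [CommRing R] (A : Matrix ι ι R) (i j : ι) :
    (Pi.single i 1 - Pi.single j 1) ⬝ᵥ A *ᵥ (Pi.single i 1 - Pi.single j 1) =
      A i i - A i j - A j i + A j j := by
  simp only [mulVec_sub, dotProduct_sub, sub_dotProduct, mulVec_single_one, single_dotProduct,
    one_mul, col_apply]
  ring

theorem SimpleGraph.adjMatrix_mulVec_add_compl_apply {V α : Type*} [Fintype V] [DecidableEq V]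
    [Ring α] (G : SimpleGraph V) [DecidableRel G.Adj] (x : V → α) (v : V) :
    (G.adjMatrix α *ᵥ x) v + (Gᶜ.adjMatrix α *ᵥ x) v = ∑ w, x w - x v := by
  rw [← Pi.add_apply, ← add_mulVec,
    IsCompl.adjMatrix_add_adjMatrix_eq_adjMatrix_completeGraph α isCompl_compl,
    adjMatrix_completeGraph_eq_of_one_sub_one, sub_mulVec]
  simp [mulVec, dotProduct]

theorem quadratic_coeffs_of_isLocalMin {a b c : ℝ}
    (h : IsLocalMin (fun t => c + a * t + b * t ^ 2) 0) : a = 0 ∧ 0 ≤ b := by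
  have ha : a = 0 := by
    have hderiv : HasDerivAt (fun t => c + a * t + b * t ^ 2) (a * 1 + b * (↑2 * 0 ^ (2 - 1))) 0 :=
      (((hasDerivAt_id' 0).const_mul a).const_add c).add ((hasDerivAt_pow 2 0).const_mul b)
    simpa using h.hasDerivAt_eq_zero hderiv
  subst ha
  refine ⟨rfl, ?_⟩
  obtain ⟨t, ht, ht0⟩ := ((Eventually.filter_mono nhdsWithin_le_nhds h :
    ∀ᶠ t in 𝓝[≠] (0 : ℝ), _).and self_mem_nhdsWithin).exists
  have ht0 : t ≠ 0 := ht0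
  simp only [zero_mul, add_zero, ne_eq, OfNat.ofNat_ne_zero, not_false_eq_true, zero_pow] at ht
  have : 0 < t ^ 2 := by positivity
  nlinarith

theorem IsLocalMinOn.isLocalMin_add_smul {ι : Type*} [Fintype ι] {f : (ι → ℝ) → ℝ}
    {a b x d : ι → ℝ} (h : IsLocalMinOn f (Set.Icc a b) x) (hx : x ∈ Set.Icc a b)
    (hd : ∀ i, d i ≠ 0 → x i ∈ Set.Ioo (a i) (b i)) :
    IsLocalMin (fun t : ℝ => f (x + t • d)) 0 := by
  have hline : Tendsto (fun t : ℝ => x + t • d) (𝓝 0) (𝓝 x) := by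
    simpa using (show Continuous fun t : ℝ => x + t • d by fun_prop).tendsto 0
  have hbox : ∀ᶠ t in 𝓝 (0 : ℝ), x + t • d ∈ Set.Icc a b := by
    simp only [← Set.pi_univ_Icc, Set.mem_univ_pi]
    refine eventually_all.mpr fun i => ?_
    by_cases hdi : d i = 0
    · simpa [hdi] using ⟨hx.1 i, hx.2 i⟩
    · filter_upwards [((continuous_apply i).tendsto x).comp hline |>.eventually
        (Ioo_mem_nhds (hd i hdi).1 (hd i hdi).2)] with t ht
      exact Set.Ioo_subset_Icc_self ht
  have h0 : IsMinFilter f (𝓝[Set.Icc a b] x) (x + (0 : ℝ) • d) := by rwa [zero_smul, add_zero]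
  exact h0.comp_tendsto (g := fun t : ℝ => x + t • d) (tendsto_nhdsWithin_iff.mpr ⟨hline, hbox⟩)

section QuantNet

variable {n : ℕ} (G : SimpleGraph (Fin n)) (γ : ℝ) (x : Fin n → ℝ)

noncomputable def quantNetGrad : Fin n → ℝ :=
  γ • (G.adjMatrix ℝ *ᵥ x) - Gᶜ.adjMatrix ℝ *ᵥ x - 1

theorem quantNetObj_add_smul (d : Fin n → ℝ) (t : ℝ) :
    quantNetObj G γ (x + t • d) = quantNetObj G γ x + (d ⬝ᵥ quantNetGrad G γ x) * t +
      (γ / 2 * (d ⬝ᵥ G.adjMatrix ℝ *ᵥ d) - 1 / 2 * (d ⬝ᵥ Gᶜ.adjMatrix ℝ *ᵥ d)) * t ^ 2 := by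
  simp only [quantNetObj, quantNetGrad, G.isSymm_adjMatrix.dotProduct_mulVec_add_smul,
    Gᶜ.isSymm_adjMatrix.dotProduct_mulVec_add_smul, Pi.add_apply, Pi.smul_apply,
    smul_eq_mul, sum_add_distrib, ← mul_sum, dotProduct_sub, dotProduct_smul, dotProduct_one]
  ring

theorem quantNetGrad_eq_zero_of_isLocalMinOn {v : Fin n}
    (hmin : IsLocalMinOn (quantNetObj G γ) (Set.Icc 0 1) x) (hx : x ∈ Set.Icc 0 1)
    (hv : x v ∈ Set.Ioo 0 1) : quantNetGrad G γ x v = 0 := by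
  have hline := hmin.isLocalMin_add_smul hx (d := Pi.single v 1) fun i hi => by
    by_cases hiv : i = v
    · rwa [hiv]
    · simp [hiv] at hi
  simp only [quantNetObj_add_smul] at hline
  simpa using (quadratic_coeffs_of_isLocalMin hline).1

theorem not_isLocalMinOn_of_adj {u v : Fin n} (hγ : 0 < γ) (huv : G.Adj v u)
    (hx : x ∈ Set.Icc 0 1) (hv : x v ∈ Set.Ioo 0 1) (hu : x u ∈ Set.Ioo 0 1) :
    ¬ IsLocalMinOn (quantNetObj G γ) (Set.Icc 0 1) x := by
  intro hmin
  have hline := hmin.isLocalMin_add_smul hx (d := Pi.single v 1 - Pi.single u 1) fun i hi => by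
    by_cases hiv : i = v
    · rwa [hiv]
    · by_cases hiu : i = u
      · rwa [hiu]
      · simp [hiv, hiu] at hi
  simp only [quantNetObj_add_smul, single_sub_single_dotProduct_mulVec] at hline
  have hcoeff := (quadratic_coeffs_of_isLocalMin hline).2
  simp [huv, huv.symm, huv.ne] at hcoeff
  linarith

theorem exists_adj_pos_of_quantNetGrad_eq_zero {v : Fin n} (hx : 0 ≤ x)
    (hv : quantNetGrad G γ x v = 0) : ∃ u, G.Adj v u ∧ 0 < x u := by
  by_contra! h
  have hA : (G.adjMatrix ℝ *ᵥ x) v = 0 := by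
    rw [SimpleGraph.adjMatrix_mulVec_apply]
    exact sum_eq_zero fun u hu => le_antisymm (h u ((G.mem_neighborFinset v u).mp hu)) (hx u)
  have hB : 0 ≤ (Gᶜ.adjMatrix ℝ *ᵥ x) v := by
    rw [SimpleGraph.adjMatrix_mulVec_apply]
    exact sum_nonneg fun u _ => hx u
  simp only [quantNetGrad, Pi.sub_apply, Pi.smul_apply, hA, smul_zero, Pi.one_apply] at hv
  linarith

theorem lt_one_of_adj_of_quantNetGrad_eq_zero {u v : Fin n} (hγ : (n : ℝ) ≤ γ)
    (hx : x ∈ Set.Icc 0 1) (hv0 : 0 < x v) (hv : quantNetGrad G γ x v = 0) (huv : G.Adj v u) :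
    x u < 1 := by
  by_contra! hu
  have hs : 1 ≤ (G.adjMatrix ℝ *ᵥ x) v := by
    rw [SimpleGraph.adjMatrix_mulVec_apply]
    calc 1 ≤ x u := hu
      _ ≤ ∑ w ∈ G.neighborFinset v, x w :=
        single_le_sum (fun w _ => hx.1 w) ((G.mem_neighborFinset v u).mpr huv)
  have hγs : (n : ℝ) ≤ γ * (G.adjMatrix ℝ *ᵥ x) v :=
    calc (n : ℝ) = n * 1 := (mul_one _).symm
      _ ≤ n * (G.adjMatrix ℝ *ᵥ x) v := mul_le_mul_of_nonneg_left hs n.cast_nonneg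
      _ ≤ γ * (G.adjMatrix ℝ *ᵥ x) v := mul_le_mul_of_nonneg_right hγ (zero_le_one.trans hs)
  have hsum : (G.adjMatrix ℝ *ᵥ x) v + (Gᶜ.adjMatrix ℝ *ᵥ x) v ≤ n - x v := by
    rw [G.adjMatrix_mulVec_add_compl_apply]
    have : ∑ w, x w ≤ n := by simpa using sum_le_sum fun w (_ : w ∈ univ) => hx.2 w
    linarith
  simp only [quantNetGrad, Pi.sub_apply, Pi.smul_apply, smul_eq_mul, Pi.one_apply] at hv
  linarith

end QuantNet

theorem stmt3_general {n : ℕ} (G : SimpleGraph (Fin n))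
    (γ : ℝ) (hγ : (n : ℝ) ≤ γ) (x : Fin n → ℝ)
    (hx : x ∈ Set.Icc (0 : Fin n → ℝ) 1)
    (hmin : IsLocalMinOn (quantNetObj G γ) (Set.Icc (0 : Fin n → ℝ) 1) x) :
    ∀ v, x v = 0 ∨ x v = 1 := by
  intro v
  by_contra! hfrac
  have hv : x v ∈ Set.Ioo 0 1 := ⟨(hx.1 v).lt_of_ne' hfrac.1, (hx.2 v).lt_of_ne hfrac.2⟩
  have hγ0 : 0 < γ := lt_of_lt_of_le (by exact_mod_cast v.pos) hγ
  have hgrad := quantNetGrad_eq_zero_of_isLocalMinOn G γ x hmin hx hv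
  obtain ⟨u, huv, hu0⟩ := exists_adj_pos_of_quantNetGrad_eq_zero G γ x hx.1 hgrad
  have hu1 := lt_one_of_adj_of_quantNetGrad_eq_zero G γ x hγ hx hv.1 hgrad huv
  exact not_isLocalMinOn_of_adj G γ x hγ0 huv hx hv ⟨hu0, hu1⟩ hmin

/-- for γ ≥ n (and G having at least one edge), every local minimizer of f
over the box [0,1]^n is a binary vector. -/
theorem stmt3 {n : ℕ} (G : SimpleGraph (Fin n)) (hE : G.edgeSet.Nonempty)
    (γ : ℝ) (hγ : (n : ℝ) ≤ γ) (x : Fin n → ℝ)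
    (hx : x ∈ Set.Icc (0 : Fin n → ℝ) 1)
    (hmin : IsLocalMinOn (quantNetObj G γ) (Set.Icc (0 : Fin n → ℝ) 1) x) :
    ∀ v, x v = 0 ∨ x v = 1 :=
  stmt3_general G γ hγ x hx hmin
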